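/- arXiv:1604.05645 — 2 statements merged into one kernel-verified Lean document; each statement's English description precedes it below -/
import Mathlib

section
/- Let n ≥ 1. There exists a constant C ≥ 1 (depending only on n) such that for every integer k ≥ 1 and all p, x ∈ ℝⁿ: (1/2)·inf_{m ∈ ℤⁿ} |x − m − p|² − (log C)/k ≤ −(1/k) log Σ_{m ∈ ℤⁿ} e^{−k|x − m − p|²/2} ≤ (1/2)·inf_{m ∈ ℤⁿ} |x − m − p|². In particular −(1/k) log Σ_{m ∈ ℤⁿ + p} e^{−k|x − m|²/2} converges to d(πx, πp)²/2 uniformly in x and p as k → ∞, where d is the quotient metric on ℝⁿ/ℤⁿ. -/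
/-!
Write `y = x - p`, `d = ⨅ m, |y - m|²` and `S_t = ∑ₘ exp (-t |y - m|² / 2)`. Keeping only the
nearest lattice point gives `exp (-t d / 2) ≤ S_t`, the upper bound. Conversely, with `m₀` the
coordinatewise rounding of `y` one has `|y - m₀|² ≤ n/4`, `|m - m₀|² ≤ 2|y - m|² + 2|y - m₀|²` and,
for `t ≥ 1`, `t |y - m|² ≥ t d + (|y - m|² - d)`; together these bound each term of `S_t` by
`exp (n/4 - t d / 2) · exp (-|m - m₀|² / 4)`, so `S_t ≤ C exp (-t d / 2)` with
`C = exp (n/4) ∑ₘ exp (-|m|² / 4)` independent of `t`, `x` and `p`. Taking `-(1/t) log` of both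
bounds traps `-(1/t) log S_t` within `log C / t` of `d / 2`, which gives the uniform convergence.
-/

open Real Filter

noncomputable section

/-- Squared Euclidean norm on `ℝⁿ`. -/
def sqnorm {n : ℕ} (v : Fin n → ℝ) : ℝ := ∑ i, (v i)^2

/-- A lattice point of `ℤⁿ` viewed in `ℝⁿ`. -/
def zvec {n : ℕ} (m : Fin n → ℤ) : Fin n → ℝ := fun i => (m i : ℝ)

lemma sq_iInf_sqrt_of_nonneg {ι : Sort*} [Nonempty ι] {f : ι → ℝ} (hf : ∀ i, 0 ≤ f i) :
    (⨅ i, √(f i)) ^ 2 = ⨅ i, f i := by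
  have hbdd : BddBelow (Set.range f) := ⟨0, by rintro _ ⟨i, rfl⟩; exact hf i⟩
  rw [← Monotone.map_ciInf_of_continuousAt continuous_sqrt.continuousAt
    (fun _ _ h => Real.sqrt_le_sqrt h) hbdd, sq_sqrt (le_ciInf hf)]

lemma summable_fin_prod_of_nonneg {α : Type*} {f : α → ℝ} (hf₀ : ∀ a, 0 ≤ f a)
    (hf : Summable f) : ∀ n : ℕ, Summable fun m : Fin n → α => ∏ i, f (m i)
  | 0 => Summable.of_finite
  | n + 1 => by
    refine (Fin.consEquiv fun _ => α).summable_iff.mp ?_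
    refine (hf.mul_of_nonneg (summable_fin_prod_of_nonneg hf₀ hf n) hf₀
      fun _ => Finset.prod_nonneg fun _ _ => hf₀ _).congr fun z => ?_
    simp [Fin.prod_univ_succ]

lemma summable_exp_neg_mul_int_sq {c : ℝ} (hc : 0 < c) :
    Summable fun m : ℤ => exp (-c * m ^ 2) := by
  -- `exp (-c m²)` is the norm of the Jacobi theta summand at `z = 0`, `τ = i c / π`.
  have hτ : 0 < (((c / π : ℝ) : ℂ) * Complex.I).im := by simpa using div_pos hc pi_pos
  refine ((summable_jacobiTheta₂_term_iff 0 _).mpr hτ).norm.congr fun m => ?_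
  rw [norm_jacobiTheta₂_term]
  simp only [Complex.mul_im, Complex.ofReal_re, Complex.I_im, Complex.ofReal_im, Complex.I_re,
    Complex.zero_im]
  field_simp
  ring_nf

variable {n : ℕ}

lemma sqnorm_nonneg (v : Fin n → ℝ) : 0 ≤ sqnorm v :=
  Finset.sum_nonneg fun _ _ => sq_nonneg _

lemma sqnorm_sub_le (u v : Fin n → ℝ) : sqnorm (u - v) ≤ 2 * sqnorm u + 2 * sqnorm v := by
  simp only [sqnorm, Pi.sub_apply, Finset.mul_sum, ← Finset.sum_add_distrib]
  exact Finset.sum_le_sum fun i _ => by nlinarith [sq_nonneg (u i + v i)]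

lemma zvec_sub (m m' : Fin n → ℤ) : zvec (m - m') = zvec m - zvec m' := by
  ext i
  simp [zvec]

lemma sqnorm_sub_zvec_round_le (y : Fin n → ℝ) :
    sqnorm (y - zvec fun i => round (y i)) ≤ n / 4 := by
  calc sqnorm (y - zvec fun i => round (y i)) ≤ ∑ _i : Fin n, (1 / 4 : ℝ) :=
        Finset.sum_le_sum fun i _ => by
          have := abs_le.mp (abs_sub_round (y i))
          simp only [Pi.sub_apply, zvec]
          nlinarith
    _ = n / 4 := by simp [div_eq_mul_inv]

lemma bddBelow_range_sqnorm_sub_zvec (y : Fin n → ℝ) :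
    BddBelow (Set.range fun m : Fin n → ℤ => sqnorm (y - zvec m)) :=
  ⟨0, by rintro _ ⟨m, rfl⟩; exact sqnorm_nonneg _⟩

lemma summable_exp_neg_mul_sqnorm_zvec {c : ℝ} (hc : 0 < c) :
    Summable fun m : Fin n → ℤ => exp (-c * sqnorm (zvec m)) := by
  refine (summable_fin_prod_of_nonneg (fun _ => (exp_pos _).le)
    (summable_exp_neg_mul_int_sq hc) n).congr fun m => ?_
  simp [sqnorm, zvec, ← exp_sum, Finset.mul_sum]

lemma summable_exp_neg_mul_sqnorm_sub_zvec {t : ℝ} (ht : 0 < t) (y : Fin n → ℝ) :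
    Summable fun m : Fin n → ℤ => exp (-t * sqnorm (y - zvec m) / 2) := by
  refine ((summable_exp_neg_mul_sqnorm_zvec (c := t / 4) (by positivity)).mul_left
    (exp (t * sqnorm y / 2))).of_nonneg_of_le (fun _ => (exp_pos _).le) fun m => ?_
  rw [← exp_add, exp_le_exp]
  have := sqnorm_sub_le y (y - zvec m)
  rw [sub_sub_cancel] at this
  nlinarith

def latticeGaussConst (n : ℕ) : ℝ :=
  exp (n / 4) * ∑' m : Fin n → ℤ, exp (-(1 / 4) * sqnorm (zvec m))

lemma one_le_latticeGaussConst (n : ℕ) : 1 ≤ latticeGaussConst n := by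
  have hA : 1 ≤ ∑' m : Fin n → ℤ, exp (-(1 / 4) * sqnorm (zvec m)) := by
    simpa [sqnorm, zvec] using (summable_exp_neg_mul_sqnorm_zvec (n := n) (c := 1 / 4)
      (by norm_num)).le_tsum 0 fun _ _ => (exp_pos _).le
  exact one_le_mul_of_one_le_of_one_le (one_le_exp (by positivity)) hA

section Bounds

variable {t : ℝ} (y : Fin n → ℝ)

lemma exp_neg_mul_sqnorm_sub_zvec_le (ht : 1 ≤ t) (m : Fin n → ℤ) :
    exp (-t * sqnorm (y - zvec m) / 2) ≤
      exp (n / 4 - t * (⨅ m', sqnorm (y - zvec m')) / 2) *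
        exp (-(1 / 4) * sqnorm (zvec (m - fun i => round (y i)))) := by
  set d := ⨅ m', sqnorm (y - zvec m')
  set m₀ : Fin n → ℤ := fun i => round (y i)
  have hd : d ≤ sqnorm (y - zvec m) := ciInf_le (bddBelow_range_sqnorm_sub_zvec y) m
  have hd₀ : d ≤ sqnorm (y - zvec m₀) := ciInf_le (bddBelow_range_sqnorm_sub_zvec y) m₀
  have hm₀ := sqnorm_sub_zvec_round_le y
  have hmm₀ := sqnorm_sub_le (y - zvec m₀) (y - zvec m)
  rw [sub_sub_sub_cancel_left, ← zvec_sub] at hmm₀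
  rw [← exp_add, exp_le_exp]
  nlinarith [mul_nonneg (sub_nonneg.mpr ht) (sub_nonneg.mpr hd)]

lemma tsum_exp_neg_mul_sqnorm_sub_zvec_le (ht : 1 ≤ t) :
    ∑' m : Fin n → ℤ, exp (-t * sqnorm (y - zvec m) / 2) ≤
      latticeGaussConst n * exp (-t * (⨅ m, sqnorm (y - zvec m)) / 2) := by
  set m₀ : Fin n → ℤ := fun i => round (y i)
  have hA := (Equiv.subRight m₀).summable_iff.mpr
    (summable_exp_neg_mul_sqnorm_zvec (n := n) (c := 1 / 4) (by norm_num))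
  calc _ ≤ ∑' m : Fin n → ℤ, exp (n / 4 - t * (⨅ m', sqnorm (y - zvec m')) / 2) *
          exp (-(1 / 4) * sqnorm (zvec (m - m₀))) :=
        (summable_exp_neg_mul_sqnorm_sub_zvec (by linarith) y).tsum_le_tsum
          (exp_neg_mul_sqnorm_sub_zvec_le y ht) (hA.mul_left _)
    _ = _ := by
        have hshift : ∑' m : Fin n → ℤ, exp (-(1 / 4) * sqnorm (zvec (m - m₀))) =
            ∑' m : Fin n → ℤ, exp (-(1 / 4) * sqnorm (zvec m)) :=
          (Equiv.subRight m₀).tsum_eq fun m => exp (-(1 / 4) * sqnorm (zvec m))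
        rw [tsum_mul_left, hshift, latticeGaussConst, sub_eq_add_neg, exp_add]
        ring_nf

lemma le_neg_log_tsum_exp_neg_mul_sqnorm_sub_zvec (ht : 1 ≤ t) :
    (1 / 2) * (⨅ m, sqnorm (y - zvec m)) - log (latticeGaussConst n) / t ≤
      -(1 / t) * log (∑' m : Fin n → ℤ, exp (-t * sqnorm (y - zvec m) / 2)) := by
  have ht₀ : 0 < t := by linarith
  have hS : 0 < ∑' m : Fin n → ℤ, exp (-t * sqnorm (y - zvec m) / 2) :=
    (summable_exp_neg_mul_sqnorm_sub_zvec ht₀ y).tsum_pos (fun _ => (exp_pos _).le) 0 (exp_pos _)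
  have hlog := log_le_log hS (tsum_exp_neg_mul_sqnorm_sub_zvec_le y ht)
  rw [log_mul (by linarith [one_le_latticeGaussConst n]) (exp_pos _).ne', log_exp] at hlog
  rw [div_eq_mul_inv, ← one_div]
  have := mul_le_mul_of_nonneg_left hlog (one_div_pos.mpr ht₀).le
  field_simp at this ⊢
  linarith

lemma neg_log_tsum_exp_neg_mul_sqnorm_sub_zvec_le (ht : 0 < t) :
    -(1 / t) * log (∑' m : Fin n → ℤ, exp (-t * sqnorm (y - zvec m) / 2)) ≤
      (1 / 2) * (⨅ m, sqnorm (y - zvec m)) := by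
  have hS := summable_exp_neg_mul_sqnorm_sub_zvec ht y
  rw [mul_iInf_of_nonneg (by norm_num)]
  refine le_ciInf fun m => ?_
  have hlog := log_le_log (exp_pos _) (hS.le_tsum m fun _ _ => (exp_pos _).le)
  rw [log_exp] at hlog
  rw [neg_mul, one_div_mul_eq_div, neg_le, le_div_iff₀ ht]
  linarith

end Bounds

theorem statement11_general (n : ℕ) :
    (∃ C : ℝ, 1 ≤ C ∧ ∀ k : ℕ, 1 ≤ k → ∀ p x : Fin n → ℝ,
      (1 / 2) * (⨅ m : Fin n → ℤ, sqnorm (x - p - zvec m)) - Real.log C / k ≤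
          -(1 / (k : ℝ)) *
            Real.log (∑' m : Fin n → ℤ, Real.exp (-(k : ℝ) * sqnorm (x - p - zvec m) / 2)) ∧
        -(1 / (k : ℝ)) *
            Real.log (∑' m : Fin n → ℤ, Real.exp (-(k : ℝ) * sqnorm (x - p - zvec m) / 2)) ≤
          (1 / 2) * (⨅ m : Fin n → ℤ, sqnorm (x - p - zvec m))) ∧
    (∀ ε > (0:ℝ), ∃ K : ℕ, ∀ k : ℕ, K ≤ k → ∀ p x : Fin n → ℝ,
      |(-(1 / (k : ℝ)) *
          Real.log (∑' m : Fin n → ℤ, Real.exp (-(k : ℝ) * sqnorm (x - p - zvec m) / 2))) -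
        (⨅ m : Fin n → ℤ, Real.sqrt (sqnorm (x - p - zvec m))) ^ 2 / 2| ≤ ε) := by
  have hC := one_le_latticeGaussConst n
  refine ⟨⟨latticeGaussConst n, hC, fun k hk p x =>
    ⟨le_neg_log_tsum_exp_neg_mul_sqnorm_sub_zvec (x - p) (Nat.one_le_cast.mpr hk),
      neg_log_tsum_exp_neg_mul_sqnorm_sub_zvec_le (x - p) (by positivity)⟩⟩, fun ε hε => ?_⟩
  obtain ⟨K, hK⟩ := exists_nat_ge (log (latticeGaussConst n) / ε)
  refine ⟨max K 1, fun k hk p x => ?_⟩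
  have hk₁ : (1 : ℝ) ≤ k := Nat.one_le_cast.mpr (le_of_max_le_right hk)
  have hlogC : log (latticeGaussConst n) / k ≤ ε := by
    rw [div_le_iff₀ (by linarith)]
    rw [div_le_iff₀ hε] at hK
    nlinarith [(Nat.cast_le (α := ℝ)).mpr (le_of_max_le_left hk)]
  have hlow := le_neg_log_tsum_exp_neg_mul_sqnorm_sub_zvec (x - p) hk₁
  have hup := neg_log_tsum_exp_neg_mul_sqnorm_sub_zvec_le (x - p) (zero_lt_one.trans_le hk₁)
  rw [sq_iInf_sqrt_of_nonneg fun m => sqnorm_nonneg _, abs_le]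
  constructor <;> linarith [div_nonneg (log_nonneg hC) (by linarith : (0 : ℝ) ≤ k)]

/-- There is a constant `C ≥ 1` (depending only on `n`) such that for all
`k ≥ 1` and all `p, x ∈ ℝⁿ`,
`(1/2) inf_m |x-m-p|² - (log C)/k ≤ -(1/k) log Σ_m e^{-k|x-m-p|²/2} ≤ (1/2) inf_m |x-m-p|²`;
in particular `-(1/k) log Σ_{m ∈ ℤⁿ+p} e^{-k|x-m|²/2} → d(πx,πp)²/2` uniformly in `x, p`. -/
theorem statement11 (n : ℕ) (hn : 1 ≤ n) :
    (∃ C : ℝ, 1 ≤ C ∧ ∀ k : ℕ, 1 ≤ k → ∀ p x : Fin n → ℝ,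
      (1 / 2) * (⨅ m : Fin n → ℤ, sqnorm (x - p - zvec m)) - Real.log C / k ≤
          -(1 / (k : ℝ)) *
            Real.log (∑' m : Fin n → ℤ, Real.exp (-(k : ℝ) * sqnorm (x - p - zvec m) / 2)) ∧
        -(1 / (k : ℝ)) *
            Real.log (∑' m : Fin n → ℤ, Real.exp (-(k : ℝ) * sqnorm (x - p - zvec m) / 2)) ≤
          (1 / 2) * (⨅ m : Fin n → ℤ, sqnorm (x - p - zvec m))) ∧
    (∀ ε > (0:ℝ), ∃ K : ℕ, ∀ k : ℕ, K ≤ k → ∀ p x : Fin n → ℝ,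
      |(-(1 / (k : ℝ)) *
          Real.log (∑' m : Fin n → ℤ, Real.exp (-(k : ℝ) * sqnorm (x - p - zvec m) / 2))) -
        (⨅ m : Fin n → ℤ, Real.sqrt (sqnorm (x - p - zvec m))) ^ 2 / 2| ≤ ε) :=
  statement11_general n

end
end

section
/- Let n ≥ 1, X = ℝⁿ/ℤⁿ, β ≠ 0 a real number, μ₀ a Borel probability measure on X, and for φ ∈ C(X) set F(φ) = ∫_X φ^c dx + (1/β) log ∫_X e^{βφ} dμ₀. Then F((φ^c)^c) ≤ F(φ) for every φ ∈ C(X). Moreover, if μ₀ has full support, then equality holds if and only if (φ^c)^c = φ, i.e. φ ∈ P(X). -/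
open MeasureTheory Filter Topology Real
open scoped ENNReal NNReal

noncomputable section

instance fact_zero_lt_one' : Fact ((0:ℝ) < 1) := ⟨one_pos⟩

/-- The `n`-dimensional torus `ℝⁿ/ℤⁿ`. -/
abbrev Torus (n : ℕ) : Type := Fin n → AddCircle (1 : ℝ)

/-- Section of the quotient map, with values in `[0,1)ⁿ`. -/
def torusSec {n : ℕ} (x : Torus n) : Fin n → ℝ := fun i => (AddCircle.equivIco 1 0 (x i) : ℝ)

/-- The quotient metric `d(πx, πy) = inf_{m ∈ ℤⁿ} |x - y - m|` on the torus. -/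
def tdist {n : ℕ} (x y : Torus n) : ℝ :=
  ⨅ m : Fin n → ℤ, Real.sqrt (sqnorm (torusSec x - torusSec y - zvec m))

/-- The `c`-transform `φ^c(y) = sup_x (-d(x,y)²/2 - φ(x))` on the torus. -/
def ctrans {n : ℕ} (φ : Torus n → ℝ) (y : Torus n) : ℝ :=
  ⨆ x : Torus n, (-(tdist x y ^ 2) / 2 - φ x)

/-- The free energy functional `F(φ) = ∫_X φ^c dx + (1/β) log ∫_X e^{βφ} dμ₀`. -/
def freeEnergy {n : ℕ} (β : ℝ) (μ₀ : Measure (Torus n)) (φ : Torus n → ℝ) : ℝ :=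
  (∫ y, ctrans φ y ∂(volume : Measure (Torus n))) +
    (1 / β) * Real.log (∫ x, Real.exp (β * φ x) ∂μ₀)

/-!
Since `(φ^c)^c ≤ φ` and `((φ^c)^c)^c = φ^c`, the transport terms of `F((φ^c)^c)` and `F(φ)`
coincide, and the comparison reduces to `(1/β) log ∫ e^{βψ} dμ₀`, i.e. `(1/β) cgf ψ μ₀ β`.
This is monotone in `ψ` for either sign of `β`, and strictly monotone on continuous functions
when `μ₀` charges every nonempty open set. Continuity of `c`-transforms comes from the quadratic
cost being Lipschitz on the torus, whose diameter is at most `√n`.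
-/

open ProbabilityTheory

section TorusDistance

variable {n : ℕ}

lemma sqrt_sqnorm_eq_norm (v : Fin n → ℝ) : √(sqnorm v) = ‖WithLp.toLp 2 v‖ := by
  simp [EuclideanSpace.norm_eq, sqnorm, sq_abs]

lemma tdist_le (x y : Torus n) (m : Fin n → ℤ) :
    tdist x y ≤ √(sqnorm (torusSec x - torusSec y - zvec m)) :=
  ciInf_le ⟨0, by rintro r ⟨m, rfl⟩; positivity⟩ m

lemma tdist_nonneg (x y : Torus n) : 0 ≤ tdist x y :=
  Real.iInf_nonneg fun _ => Real.sqrt_nonneg _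

lemma tdist_comm (x y : Torus n) : tdist x y = tdist y x := by
  have key : ∀ a b : Torus n, tdist a b ≤ tdist b a := fun a b =>
    le_ciInf fun m => (tdist_le a b (-m)).trans_eq <| congrArg _ <|
      Finset.sum_congr rfl fun i _ => by
        simp only [zvec, Pi.sub_apply, Pi.neg_apply, Int.cast_neg]
        ring
  exact le_antisymm (key x y) (key y x)

lemma tdist_triangle (x y z : Torus n) : tdist x z ≤ tdist x y + tdist y z :=
  le_ciInf_add_ciInf fun m₁ m₂ => by
    have h : torusSec x - torusSec z - zvec (m₁ + m₂)
        = (torusSec x - torusSec y - zvec m₁) + (torusSec y - torusSec z - zvec m₂) := by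
      funext i; simp only [zvec, Pi.sub_apply, Pi.add_apply, Int.cast_add]; ring
    calc tdist x z ≤ √(sqnorm (torusSec x - torusSec z - zvec (m₁ + m₂))) := tdist_le x z _
      _ ≤ _ := by
        simp only [h, sqrt_sqnorm_eq_norm, WithLp.toLp_add]
        exact norm_add_le _ _

lemma tdist_le_sqrt_card (x y : Torus n) : tdist x y ≤ √n := by
  refine (tdist_le x y 0).trans (Real.sqrt_le_sqrt ?_)
  have hcoord : ∀ i, (torusSec x i - torusSec y i) ^ 2 ≤ 1 := fun i => by
    obtain ⟨hx₀, hx₁⟩ := (AddCircle.equivIco 1 0 (x i)).2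
    obtain ⟨hy₀, hy₁⟩ := (AddCircle.equivIco 1 0 (y i)).2
    simp only [torusSec]
    nlinarith
  simpa [sqnorm, zvec] using Finset.sum_le_sum fun i (_ : i ∈ Finset.univ) => hcoord i

lemma tdist_le_sqrt_card_mul_dist (x y : Torus n) : tdist x y ≤ √n * dist x y := by
  let m : Fin n → ℤ := fun i => round (torusSec x i - torusSec y i)
  -- the rounding `m` realizes each coordinate distance on the circle
  have hcoord : ∀ i, |torusSec x i - torusSec y i - m i| = dist (x i) (y i) := fun i => by
    have hsec : ((torusSec x i - torusSec y i : ℝ) : AddCircle (1 : ℝ)) = x i - y i := by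
      simp only [torusSec, AddCircle.coe_sub, AddCircle.coe_equivIco]
    rw [dist_eq_norm, ← hsec, UnitAddCircle.norm_eq]
  refine (tdist_le x y m).trans ?_
  rw [← Real.sqrt_sq (dist_nonneg (x := x) (y := y)), ← Real.sqrt_mul n.cast_nonneg]
  refine Real.sqrt_le_sqrt ?_
  have hsq : ∀ i, (torusSec x i - torusSec y i - m i) ^ 2 ≤ dist x y ^ 2 := fun i => by
    rw [← sq_abs, hcoord]
    exact pow_le_pow_left₀ dist_nonneg (dist_le_pi_dist x y i) 2
  simpa [sqnorm, zvec] using Finset.sum_le_sum fun i (_ : i ∈ Finset.univ) => hsq i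

end TorusDistance

section CTransform

variable {n : ℕ} {φ ψ : Torus n → ℝ}

lemma le_ctrans (hφ : BddBelow (Set.range φ)) (x y : Torus n) :
    -(tdist x y ^ 2) / 2 - φ x ≤ ctrans φ y := by
  obtain ⟨m, hm⟩ := hφ
  refine le_ciSup (f := fun x => -(tdist x y ^ 2) / 2 - φ x) ⟨-m, ?_⟩ x
  rintro _ ⟨z, rfl⟩
  have := hm ⟨z, rfl⟩
  nlinarith [sq_nonneg (tdist z y)]

lemma ctrans_le {r : ℝ} {y : Torus n} (h : ∀ x, -(tdist x y ^ 2) / 2 - φ x ≤ r) :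
    ctrans φ y ≤ r :=
  ciSup_le h

lemma ctrans_anti (hφ : BddBelow (Set.range φ)) (h : φ ≤ ψ) : ctrans ψ ≤ ctrans φ :=
  fun y => ctrans_le fun x => (sub_le_sub_left (h x) _).trans (le_ctrans hφ x y)

lemma ctrans_ctrans_le (hφ : BddBelow (Set.range φ)) : ctrans (ctrans φ) ≤ φ :=
  fun x => ctrans_le fun y => by
    have := le_ctrans hφ x y
    rw [tdist_comm] at this
    linarith

lemma neg_sq_tdist_div_two_le (x y z : Torus n) :
    -(tdist x y ^ 2) / 2 ≤ -(tdist x z ^ 2) / 2 + √n * tdist y z := by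
  have key : (tdist x z - tdist x y) * (tdist x z + tdist x y) ≤ tdist y z * (2 * √n) :=
    mul_le_mul (by linarith [tdist_triangle x y z])
      (by linarith [tdist_le_sqrt_card x y, tdist_le_sqrt_card x z])
      (by linarith [tdist_nonneg x y, tdist_nonneg x z]) (tdist_nonneg y z)
  linarith

lemma ctrans_le_ctrans_add (hφ : BddBelow (Set.range φ)) (y z : Torus n) :
    ctrans φ y ≤ ctrans φ z + √n * tdist y z :=
  ctrans_le fun x => by linarith [neg_sq_tdist_div_two_le x y z, le_ctrans hφ x z]

lemma lipschitzWith_ctrans (hφ : BddBelow (Set.range φ)) : LipschitzWith n (ctrans φ) :=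
  LipschitzWith.of_le_add_mul _ fun y z => by
    have h := mul_le_mul_of_nonneg_left (tdist_le_sqrt_card_mul_dist y z) (Real.sqrt_nonneg n)
    rw [← mul_assoc, Real.mul_self_sqrt n.cast_nonneg] at h
    simpa using (ctrans_le_ctrans_add hφ y z).trans (by linarith)

lemma continuous_ctrans (hφ : BddBelow (Set.range φ)) : Continuous (ctrans φ) :=
  (lipschitzWith_ctrans hφ).continuous

lemma ctrans_ctrans_ctrans (hφ : BddBelow (Set.range φ)) :
    ctrans (ctrans (ctrans φ)) = ctrans φ := by
  have hφc : BddBelow (Set.range (ctrans φ)) := (isCompact_range (continuous_ctrans hφ)).bddBelow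
  have hφcc : BddBelow (Set.range (ctrans (ctrans φ))) :=
    (isCompact_range (continuous_ctrans hφc)).bddBelow
  exact le_antisymm (ctrans_ctrans_le hφc) (ctrans_anti hφcc (ctrans_ctrans_le hφ))

end CTransform

section CumulantGeneratingFunction

variable {α : Type*} [TopologicalSpace α] [CompactSpace α] [MeasurableSpace α]
  [OpensMeasurableSpace α] {μ : Measure α} [IsFiniteMeasure μ] {X Y : α → ℝ}

lemma integrable_exp_mul_of_continuous (hX : Continuous X) (t : ℝ) :
    Integrable (fun x => exp (t * X x)) μ :=
  (by fun_prop : Continuous fun x => exp (t * X x)).integrable_of_hasCompactSupport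
    (HasCompactSupport.of_compactSpace _)

variable [NeZero μ]

lemma cgf_le_cgf_of_le (hX : Continuous X) (hY : Continuous Y) (h : X ≤ Y) {t : ℝ}
    (ht : 0 ≤ t) : cgf X μ t ≤ cgf Y μ t :=
  Real.log_le_log (mgf_pos' (NeZero.ne μ) (integrable_exp_mul_of_continuous hX t)) <|
    integral_mono (integrable_exp_mul_of_continuous hX t) (integrable_exp_mul_of_continuous hY t)
      fun x => exp_le_exp.mpr (mul_le_mul_of_nonneg_left (h x) ht)

lemma cgf_lt_cgf_of_le_of_ne [μ.IsOpenPosMeasure] (hX : Continuous X) (hY : Continuous Y)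
    (h : X ≤ Y) (hne : X ≠ Y) {t : ℝ} (ht : 0 < t) : cgf X μ t < cgf Y μ t := by
  obtain ⟨x₀, hx₀⟩ := Function.ne_iff.mp hne
  have hIX := integrable_exp_mul_of_continuous (μ := μ) hX t
  have hIY := integrable_exp_mul_of_continuous (μ := μ) hY t
  have hgap : 0 < ∫ x, (exp (t * Y x) - exp (t * X x)) ∂μ :=
    integral_pos_of_integrable_nonneg_nonzero (x := x₀) (by fun_prop) (hIY.sub hIX)
      (fun x => sub_nonneg.mpr (exp_le_exp.mpr (mul_le_mul_of_nonneg_left (h x) ht.le)))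
      (sub_ne_zero.mpr fun heq => hx₀ (mul_left_cancel₀ ht.ne' (exp_injective heq)).symm)
  rw [integral_sub hIY hIX, sub_pos] at hgap
  exact Real.log_lt_log (mgf_pos' (NeZero.ne μ) hIX) hgap

lemma one_div_mul_cgf_le_of_le (hX : Continuous X) (hY : Continuous Y) (h : X ≤ Y) (t : ℝ) :
    1 / t * cgf X μ t ≤ 1 / t * cgf Y μ t := by
  rcases le_or_gt 0 t with ht | ht
  · exact mul_le_mul_of_nonneg_left (cgf_le_cgf_of_le hX hY h ht) (by positivity)
  · obtain ⟨s, rfl⟩ : ∃ s, t = -s := ⟨-t, (neg_neg t).symm⟩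
    rw [← cgf_neg, ← cgf_neg]
    exact mul_le_mul_of_nonpos_left (cgf_le_cgf_of_le hY.neg hX.neg (neg_le_neg h) (by linarith))
      (by rw [one_div, inv_nonpos]; exact ht.le)

lemma one_div_mul_cgf_lt_of_le_of_ne [μ.IsOpenPosMeasure] (hX : Continuous X) (hY : Continuous Y)
    (h : X ≤ Y) (hne : X ≠ Y) {t : ℝ} (ht : t ≠ 0) :
    1 / t * cgf X μ t < 1 / t * cgf Y μ t := by
  rcases ht.lt_or_gt with ht | ht
  · obtain ⟨s, rfl⟩ : ∃ s, t = -s := ⟨-t, (neg_neg t).symm⟩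
    rw [← cgf_neg, ← cgf_neg]
    exact mul_lt_mul_of_neg_left (cgf_lt_cgf_of_le_of_ne hY.neg hX.neg (neg_le_neg h)
      (neg_injective.ne hne.symm) (by linarith)) (by rwa [one_div, inv_lt_zero])
  · exact mul_lt_mul_of_pos_left (cgf_lt_cgf_of_le_of_ne hX hY h hne ht) (by positivity)

end CumulantGeneratingFunction

lemma freeEnergy_eq {n : ℕ} (β : ℝ) (μ₀ : Measure (Torus n)) (φ : Torus n → ℝ) :
    freeEnergy β μ₀ φ = (∫ y, ctrans φ y) + 1 / β * cgf φ μ₀ β :=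
  rfl

theorem statement18_general (n : ℕ) (β : ℝ) (hβ : β ≠ 0)
    (μ₀ : Measure (Torus n)) [IsProbabilityMeasure μ₀]
    (φ : Torus n → ℝ) (hφ : Continuous φ) :
    freeEnergy β μ₀ (ctrans (ctrans φ)) ≤ freeEnergy β μ₀ φ ∧
      ((∀ U : Set (Torus n), IsOpen U → U.Nonempty → 0 < μ₀ U) →
        (freeEnergy β μ₀ (ctrans (ctrans φ)) = freeEnergy β μ₀ φ ↔
          ctrans (ctrans φ) = φ)) := by
  have hφb : BddBelow (Set.range φ) := (isCompact_range hφ).bddBelow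
  have hψ : Continuous (ctrans (ctrans φ)) :=
    continuous_ctrans (isCompact_range (continuous_ctrans hφb)).bddBelow
  have hle : ctrans (ctrans φ) ≤ φ := ctrans_ctrans_le hφb
  simp only [freeEnergy_eq, ctrans_ctrans_ctrans hφb, add_le_add_iff_left, add_right_inj]
  refine ⟨one_div_mul_cgf_le_of_le hψ hφ hle β, fun hfull => ⟨fun heq => ?_, fun h => by rw [h]⟩⟩
  have : μ₀.IsOpenPosMeasure := ⟨fun U hU hne => (hfull U hU hne).ne'⟩
  by_contra hne
  exact (one_div_mul_cgf_lt_of_le_of_ne hψ hφ hle hne hβ).ne heq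

/-- The projection `φ ↦ (φ^c)^c` does not increase the free energy:
`F((φ^c)^c) ≤ F(φ)`; and if `μ₀` has full support, equality holds iff `(φ^c)^c = φ`. -/
theorem statement18 (n : ℕ) (hn : 1 ≤ n) (β : ℝ) (hβ : β ≠ 0)
    (μ₀ : Measure (Torus n)) [IsProbabilityMeasure μ₀]
    (φ : Torus n → ℝ) (hφ : Continuous φ) :
    freeEnergy β μ₀ (ctrans (ctrans φ)) ≤ freeEnergy β μ₀ φ ∧
      ((∀ U : Set (Torus n), IsOpen U → U.Nonempty → 0 < μ₀ U) →
        (freeEnergy β μ₀ (ctrans (ctrans φ)) = freeEnergy β μ₀ φ ↔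
          ctrans (ctrans φ) = φ)) :=
  statement18_general n β hβ μ₀ φ hφ
end
end
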